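/- arXiv:1110.2805 — 9 statements merged into one kernel-verified Lean document; each statement's English description precedes it below -/
import Mathlib

section
/- A nonnegative square matrix B has total support if and only if there exists a doubly stochastic matrix D with the same zero pattern as B (i.e., D_ij > 0 exactly when B_ij > 0). -/
/-!
By Birkhoff's theorem a doubly stochastic matrix is a convex combination `∑ σ, w σ • P_σ` of
permutation matrices, and an entry `(i, j)` of such a combination is positive exactly when some
`σ` with `w σ > 0` sends `i` to `j`. So the support of a doubly stochastic matrix is a union of
diagonals, each positive for any matrix with the same support; this gives total support.
Conversely, if `B` has total support, the uniform average of the permutation matrices of all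
positive diagonals of `B` is doubly stochastic and has exactly the support of `B`.
-/

/-- `B` has total support: `B ≠ 0` and every nonzero entry lies on a positive
diagonal. -/
def HasTotalSupport {n : ℕ} (B : Matrix (Fin n) (Fin n) ℝ) : Prop :=
  B ≠ 0 ∧ ∀ i j, B i j ≠ 0 →
    ∃ σ : Equiv.Perm (Fin n), σ i = j ∧ ∀ k, 0 < B k (σ k)

/-- `M` is doubly stochastic: nonnegative with unit row and column sums. -/
def IsDoublyStochastic {n : ℕ} (M : Matrix (Fin n) (Fin n) ℝ) : Prop :=
  (∀ i j, 0 ≤ M i j) ∧ (∀ i, ∑ j, M i j = 1) ∧ (∀ j, ∑ i, M i j = 1)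

open Finset

section PermMatrix

variable {ι R : Type*} [Fintype ι] [DecidableEq ι]

lemma sum_smul_permMatrix_apply [Semiring R] (w : Equiv.Perm ι → R) (i j : ι) :
    (∑ σ, w σ • σ.permMatrix R) i j = ∑ σ with σ i = j, w σ := by
  simp [Matrix.sum_apply, sum_ite]

lemma sum_smul_permMatrix_apply_pos_iff [Semiring R] [PartialOrder R] [IsOrderedAddMonoid R]
    {w : Equiv.Perm ι → R} (hw : ∀ σ, 0 ≤ w σ) (i j : ι) :
    0 < (∑ σ, w σ • σ.permMatrix R) i j ↔ ∃ σ, 0 < w σ ∧ σ i = j := by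
  rw [sum_smul_permMatrix_apply, sum_pos_iff_of_nonneg fun σ _ => hw σ]
  simp [and_comm]

end PermMatrix

lemma isDoublyStochastic_sum_smul_permMatrix {n : ℕ} {w : Equiv.Perm (Fin n) → ℝ}
    (hw₀ : ∀ σ, 0 ≤ w σ) (hw₁ : ∑ σ, w σ = 1) :
    IsDoublyStochastic (∑ σ, w σ • σ.permMatrix ℝ) :=
  mem_doublyStochastic_iff_sum.1 <|
    convex_doublyStochastic.sum_mem (fun σ _ => hw₀ σ) hw₁
      fun _ _ => permMatrix_mem_doublyStochastic

lemma IsDoublyStochastic.exists_eq_sum_smul_permMatrix {n : ℕ} {D : Matrix (Fin n) (Fin n) ℝ}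
    (hD : IsDoublyStochastic D) :
    ∃ w : Equiv.Perm (Fin n) → ℝ, (∀ σ, 0 ≤ w σ) ∧ ∑ σ, w σ = 1 ∧
      ∑ σ, w σ • σ.permMatrix ℝ = D :=
  exists_eq_sum_perm_of_mem_doublyStochastic (mem_doublyStochastic_iff_sum.2 hD)

noncomputable def positiveDiagonals {n : ℕ} (B : Matrix (Fin n) (Fin n) ℝ) :
    Finset (Equiv.Perm (Fin n)) :=
  {σ | ∀ k, 0 < B k (σ k)}

lemma mem_positiveDiagonals {n : ℕ} {B : Matrix (Fin n) (Fin n) ℝ} {σ : Equiv.Perm (Fin n)} :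
    σ ∈ positiveDiagonals B ↔ ∀ k, 0 < B k (σ k) := by
  simp [positiveDiagonals]

lemma HasTotalSupport.positiveDiagonals_nonempty {n : ℕ} {B : Matrix (Fin n) (Fin n) ℝ}
    (hB : HasTotalSupport B) : (positiveDiagonals B).Nonempty := by
  obtain ⟨hB₀, hdiag⟩ := hB
  obtain ⟨i, j, hij⟩ : ∃ i j, B i j ≠ 0 := by
    by_contra! h
    exact hB₀ (Matrix.ext h)
  obtain ⟨σ, -, hσ⟩ := hdiag i j hij
  exact ⟨σ, mem_positiveDiagonals.2 hσ⟩

theorem HasTotalSupport.exists_isDoublyStochastic {n : ℕ} {B : Matrix (Fin n) (Fin n) ℝ}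
    (hB : HasTotalSupport B) :
    ∃ D : Matrix (Fin n) (Fin n) ℝ, IsDoublyStochastic D ∧ ∀ i j, 0 < D i j ↔ 0 < B i j := by
  set S := positiveDiagonals B
  have hS : (0 : ℝ) < #S := by exact_mod_cast hB.positiveDiagonals_nonempty.card_pos
  set w : Equiv.Perm (Fin n) → ℝ := fun σ => if σ ∈ S then (#S : ℝ)⁻¹ else 0
  have hw₀ : ∀ σ, 0 ≤ w σ := fun σ => by positivity
  have hw₁ : ∑ σ, w σ = 1 := by simp [w, sum_ite_mem, hS.ne']
  refine ⟨_, isDoublyStochastic_sum_smul_permMatrix hw₀ hw₁, fun i j => ?_⟩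
  rw [sum_smul_permMatrix_apply_pos_iff hw₀]
  constructor
  · rintro ⟨σ, hσ, rfl⟩
    have hσS : σ ∈ S := by by_contra h; simp [w, h] at hσ
    exact mem_positiveDiagonals.1 hσS i
  · intro hij
    obtain ⟨σ, rfl, hσ⟩ := hB.2 i j hij.ne'
    have hσS : σ ∈ S := mem_positiveDiagonals.2 hσ
    exact ⟨σ, by simp [w, hσS, hS], rfl⟩

theorem IsDoublyStochastic.hasTotalSupport {n : ℕ} (hn : 0 < n)
    {B D : Matrix (Fin n) (Fin n) ℝ} (hB : ∀ i j, 0 ≤ B i j) (hD : IsDoublyStochastic D)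
    (hDB : ∀ i j, 0 < D i j ↔ 0 < B i j) : HasTotalSupport B := by
  obtain ⟨w, hw₀, hw₁, rfl⟩ := hD.exists_eq_sum_smul_permMatrix
  have hsupp : ∀ i j, 0 < B i j ↔ ∃ σ, 0 < w σ ∧ σ i = j := fun i j => by
    rw [← hDB, sum_smul_permMatrix_apply_pos_iff hw₀]
  have hdiag : ∀ σ, 0 < w σ → ∀ k, 0 < B k (σ k) := fun σ hσ k => (hsupp _ _).2 ⟨σ, hσ, rfl⟩
  refine ⟨fun hzero => ?_, fun i j hij => ?_⟩
  · obtain ⟨σ, -, hσ⟩ : ∃ σ ∈ univ, 0 < w σ :=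
      (sum_pos_iff_of_nonneg fun σ _ => hw₀ σ).1 (hw₁ ▸ one_pos)
    simpa [hzero] using hdiag σ hσ ⟨0, hn⟩
  · obtain ⟨σ, hσ, rfl⟩ := (hsupp i j).1 ((hB i j).lt_of_ne' hij)
    exact ⟨σ, rfl, hdiag σ hσ⟩

/-- A nonnegative square matrix `B` has total support iff there is a doubly
stochastic matrix with the same zero pattern. -/
theorem stmt_6 (n : ℕ) (hn : 0 < n) (B : Matrix (Fin n) (Fin n) ℝ)
    (hB : ∀ i j, 0 ≤ B i j) :
    HasTotalSupport B ↔
      ∃ D : Matrix (Fin n) (Fin n) ℝ, IsDoublyStochastic D ∧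
        ∀ i j, 0 < D i j ↔ 0 < B i j :=
  ⟨HasTotalSupport.exists_isDoublyStochastic,
    fun ⟨_, hD, hDB⟩ => hD.hasTotalSupport hn hB hDB⟩
end

section
/- If a nonnegative square matrix B is fully indecomposable, then B has total support. -/
/-!
Fix a nonzero entry `B i j` and restrict the support of `B`: row `i` may only use column `j`, and
the other rows may not use column `j`. A positive diagonal through `(i, j)` is a perfect matching
of this bipartite graph, so by Hall's theorem it suffices that every set `s` of rows sees at least
`#s` columns. Full indecomposability says that every nonempty proper set of rows sees strictly more
columns than it has elements, and that one extra column pays for the forbidden column `j` (when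
`i ∉ s`) or for the restricted row `i` (when `i ∈ s`).
-/

/-- `B` is partly decomposable: there are nonempty index sets `S`, `T` with
`|S| + |T| = n` such that `B i j = 0` for all `i ∈ S`, `j ∈ T` (equivalently,
permutation matrices `P`, `Q` bring `B` to the block form `[[E,0],[C,D]]` with
`E`, `D` square). -/
def PartlyDecomposable {n : ℕ} (B : Matrix (Fin n) (Fin n) ℝ) : Prop :=
  ∃ S T : Finset (Fin n), S.Nonempty ∧ T.Nonempty ∧ S.card + T.card = n ∧
    ∀ i ∈ S, ∀ j ∈ T, B i j = 0

/-- `B` is fully indecomposable if it is not partly decomposable. -/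
def FullyIndecomposable {n : ℕ} (B : Matrix (Fin n) (Fin n) ℝ) : Prop :=
  ¬ PartlyDecomposable B

/-- Every nonzero entry of `B` lies on a positive diagonal. -/
def TotalSupport {n : ℕ} (B : Matrix (Fin n) (Fin n) ℝ) : Prop :=
  ∀ i j, B i j ≠ 0 →
    ∃ σ : Equiv.Perm (Fin n), σ i = j ∧ ∀ k, 0 < B k (σ k)

open Finset

theorem Equiv.Perm.exists_forall_mem_of_hall {α : Type*} [Fintype α] [DecidableEq α]
    (t : α → Finset α) (ht : ∀ s : Finset α, #s ≤ #(s.biUnion t)) :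
    ∃ σ : Equiv.Perm α, ∀ k, σ k ∈ t k := by
  obtain ⟨f, hf, hft⟩ := (all_card_le_biUnion_card_iff_existsInjective' t).mp ht
  exact ⟨Equiv.ofBijective f (Finite.injective_iff_bijective.mp hf), hft⟩

variable {n : ℕ} {B : Matrix (Fin n) (Fin n) ℝ}

noncomputable def columnSupport (B : Matrix (Fin n) (Fin n) ℝ) (s : Finset (Fin n)) :
    Finset (Fin n) :=
  s.biUnion fun k => {l | B k l ≠ 0}

theorem mem_columnSupport {s : Finset (Fin n)} {l : Fin n} :
    l ∈ columnSupport B s ↔ ∃ k ∈ s, B k l ≠ 0 := by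
  simp [columnSupport]

theorem partlyDecomposable_of_zero_block {S T : Finset (Fin n)} (hS : S.Nonempty)
    (hSn : #S < n) (hST : n ≤ #S + #T) (hzero : ∀ i ∈ S, ∀ j ∈ T, B i j = 0) :
    PartlyDecomposable B := by
  obtain ⟨T', hT'T, hT'⟩ := exists_subset_card_eq (show n - #S ≤ #T by omega)
  refine ⟨S, T', hS, ?_, by omega, fun i hi j hj => hzero i hi j (hT'T hj)⟩
  rw [← card_pos]
  omega

theorem FullyIndecomposable.card_lt_card_columnSupport (hfi : FullyIndecomposable B)
    {s : Finset (Fin n)} (hs : s.Nonempty) (hsn : #s < n) : #s < #(columnSupport B s) := by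
  by_contra! hle
  refine hfi (partlyDecomposable_of_zero_block hs hsn (T := (columnSupport B s)ᶜ) ?_ ?_)
  · rw [card_compl, Fintype.card_fin]
    have := card_le_univ (columnSupport B s)
    rw [Fintype.card_fin] at this
    omega
  · intro k hk l hl
    by_contra hkl
    exact mem_compl.mp hl (mem_columnSupport.mpr ⟨k, hk, hkl⟩)

noncomputable def diagonalThrough (B : Matrix (Fin n) (Fin n) ℝ) (i j k : Fin n) :
    Finset (Fin n) :=
  if k = i then {j} else ({l | l ≠ j ∧ B k l ≠ 0} : Finset (Fin n))

theorem mem_diagonalThrough_of_ne {i j k l : Fin n} (hk : k ≠ i) (hl : l ≠ j)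
    (hkl : B k l ≠ 0) :
    l ∈ diagonalThrough B i j k := by
  simp [diagonalThrough, hk, hl, hkl]

theorem FullyIndecomposable.card_le_card_biUnion_diagonalThrough_of_mem
    (hfi : FullyIndecomposable B) {i : Fin n} (j : Fin n) {s : Finset (Fin n)} (hi : i ∈ s) :
    #s ≤ #(s.biUnion (diagonalThrough B i j)) := by
  have hsub : insert j (columnSupport B (s.erase i)) ⊆ s.biUnion (diagonalThrough B i j) := by
    intro l hl
    rw [mem_biUnion]
    by_cases hlj : l = j
    · exact ⟨i, hi, by simp [diagonalThrough, hlj]⟩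
    obtain ⟨k, hk, hkl⟩ := mem_columnSupport.mp ((mem_insert.mp hl).resolve_left hlj)
    exact ⟨k, mem_of_mem_erase hk, mem_diagonalThrough_of_ne (ne_of_mem_erase hk) hlj hkl⟩
  refine le_trans ?_ (card_le_card hsub)
  have hs := card_erase_add_one hi
  rcases (s.erase i).eq_empty_or_nonempty with he | hne
  · rw [he, card_empty] at hs
    simp [← hs]
  · have hlt := hfi.card_lt_card_columnSupport hne
      (card_lt_univ_of_notMem (notMem_erase i s) |>.trans_eq (Fintype.card_fin n))
    have := card_le_card (subset_insert j (columnSupport B (s.erase i)))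
    omega

theorem FullyIndecomposable.card_le_card_biUnion_diagonalThrough_of_notMem
    (hfi : FullyIndecomposable B) {i : Fin n} (j : Fin n) {s : Finset (Fin n)} (hi : i ∉ s) :
    #s ≤ #(s.biUnion (diagonalThrough B i j)) := by
  have hsub : (columnSupport B s).erase j ⊆ s.biUnion (diagonalThrough B i j) := by
    intro l hl
    obtain ⟨k, hk, hkl⟩ := mem_columnSupport.mp (mem_of_mem_erase hl)
    exact mem_biUnion.mpr
      ⟨k, hk, mem_diagonalThrough_of_ne (ne_of_mem_of_not_mem hk hi) (ne_of_mem_erase hl) hkl⟩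
  refine le_trans ?_ (card_le_card hsub)
  rcases s.eq_empty_or_nonempty with rfl | hne
  · simp
  · have hlt := hfi.card_lt_card_columnSupport hne
      (card_lt_univ_of_notMem hi |>.trans_eq (Fintype.card_fin n))
    have := pred_card_le_card_erase (s := columnSupport B s) (a := j)
    omega

theorem FullyIndecomposable.card_le_card_biUnion_diagonalThrough (hfi : FullyIndecomposable B)
    (i j : Fin n) (s : Finset (Fin n)) : #s ≤ #(s.biUnion (diagonalThrough B i j)) := by
  by_cases hi : i ∈ s
  · exact hfi.card_le_card_biUnion_diagonalThrough_of_mem j hi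
  · exact hfi.card_le_card_biUnion_diagonalThrough_of_notMem j hi

theorem FullyIndecomposable.totalSupport_of_nonneg (hfi : FullyIndecomposable B)
    (hB : ∀ i j, 0 ≤ B i j) : TotalSupport B := by
  intro i j hij
  obtain ⟨σ, hσ⟩ :=
    Equiv.Perm.exists_forall_mem_of_hall _ (hfi.card_le_card_biUnion_diagonalThrough i j)
  have hσi : σ i = j := by simpa [diagonalThrough] using hσ i
  refine ⟨σ, hσi, fun k => (hB k (σ k)).lt_of_ne' ?_⟩
  by_cases hk : k = i
  · subst hk
    rwa [hσi]
  · exact (by simpa [diagonalThrough, hk] using hσ k : σ k ≠ j ∧ B k (σ k) ≠ 0).2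

/-- A nonnegative fully indecomposable matrix has total support. -/
theorem stmt_7 (n : ℕ) (B : Matrix (Fin n) (Fin n) ℝ)
    (hB : ∀ i j, 0 ≤ B i j) (hfi : FullyIndecomposable B) :
    TotalSupport B :=
  hfi.totalSupport_of_nonneg hB
end

section
/- If B is a nonnegative n×n matrix and R₁ B C₁ and R₂ B C₂ are both doubly stochastic for positive diagonal matrices R₁, C₁, R₂, C₂, then R₁ B C₁ = R₂ B C₂ (the doubly stochastic scaling of B is unique). -/
/-- φ(t) = t - 1 - log t vanishes only at t = 1. -/
lemma phi_eq_zero {t : ℝ} (ht : 0 < t) (h : t - 1 - Real.log t = 0) : t = 1 := by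
  by_contra hne
  have := Real.log_lt_sub_one_of_pos ht hne
  linarith

/-- Sinkhorn–Knopp, part 2: the doubly stochastic scaling of a nonnegative
matrix by positive diagonal matrices is unique. -/
theorem stmt_9 (n : ℕ) (B : Matrix (Fin n) (Fin n) ℝ)
    (hB : ∀ i j, 0 ≤ B i j)
    (r₁ c₁ r₂ c₂ : Fin n → ℝ)
    (hr₁ : ∀ i, 0 < r₁ i) (hc₁ : ∀ j, 0 < c₁ j)
    (hr₂ : ∀ i, 0 < r₂ i) (hc₂ : ∀ j, 0 < c₂ j)
    (h₁ : IsDoublyStochastic (Matrix.diagonal r₁ * B * Matrix.diagonal c₁))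
    (h₂ : IsDoublyStochastic (Matrix.diagonal r₂ * B * Matrix.diagonal c₂)) :
    Matrix.diagonal r₁ * B * Matrix.diagonal c₁
      = Matrix.diagonal r₂ * B * Matrix.diagonal c₂ := by
  have hent : ∀ (r c : Fin n → ℝ) (i j : Fin n),
      (Matrix.diagonal r * B * Matrix.diagonal c) i j = r i * B i j * c j := by
    intro r c i j
    rw [Matrix.mul_diagonal, Matrix.diagonal_mul]
  simp only [IsDoublyStochastic, hent] at h₁ h₂
  obtain ⟨h1n, h1r, h1c⟩ := h₁
  obtain ⟨h2n, h2r, h2c⟩ := h₂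
  set d : Fin n → ℝ := fun i => r₂ i / r₁ i with hd
  set e : Fin n → ℝ := fun j => c₂ j / c₁ j with he
  have hdpos : ∀ i, 0 < d i := fun i => div_pos (hr₂ i) (hr₁ i)
  have hepos : ∀ j, 0 < e j := fun j => div_pos (hc₂ j) (hc₁ j)
  set A : Fin n → Fin n → ℝ := fun i j => r₁ i * B i j * c₁ j with hA
  have hA0 : ∀ i j, 0 ≤ A i j := fun i j =>
    mul_nonneg (mul_nonneg (hr₁ i).le (hB i j)) (hc₁ j).le
  have hA2 : ∀ i j, r₂ i * B i j * c₂ j = d i * e j * A i j := by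
    intro i j
    simp only [hd, he, hA]
    field_simp
    rw [eq_div_iff (mul_ne_zero (hr₁ i).ne' (hc₁ j).ne')]
    ring
  -- row and column sums
  have row1 : ∀ i, ∑ j, A i j = 1 := h1r
  have col1 : ∀ j, ∑ i, A i j = 1 := h1c
  have row2 : ∀ i, ∑ j, d i * e j * A i j = 1 := by
    intro i; rw [← h2r i]; exact Finset.sum_congr rfl fun j _ => (hA2 i j).symm
  have col2 : ∀ j, ∑ i, d i * e j * A i j = 1 := by
    intro j; rw [← h2c j]; exact Finset.sum_congr rfl fun i _ => (hA2 i j).symm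
  set S : ℝ := (∑ i, Real.log (d i)) + ∑ j, Real.log (e j) with hS
  -- F and G
  set F : ℝ := ∑ i, ∑ j, A i j * (d i * e j - 1 - Real.log (d i * e j)) with hF
  set G : ℝ := ∑ i, ∑ j, (d i * e j * A i j) *
      ((d i * e j)⁻¹ - 1 - Real.log (d i * e j)⁻¹) with hG
  have hphi : ∀ t : ℝ, 0 < t → 0 ≤ t - 1 - Real.log t := by
    intro t ht
    have := Real.log_le_sub_one_of_pos ht
    linarith
  have hde : ∀ i j, 0 < d i * e j := fun i j => mul_pos (hdpos i) (hepos j)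
  have hFterm : ∀ i j, 0 ≤ A i j * (d i * e j - 1 - Real.log (d i * e j)) :=
    fun i j => mul_nonneg (hA0 i j) (hphi _ (hde i j))
  have hGterm : ∀ i j, 0 ≤ (d i * e j * A i j) *
      ((d i * e j)⁻¹ - 1 - Real.log (d i * e j)⁻¹) :=
    fun i j => mul_nonneg (mul_nonneg (hde i j).le (hA0 i j)) (hphi _ (inv_pos.mpr (hde i j)))
  have hFnn : 0 ≤ F := Finset.sum_nonneg fun i _ =>
    Finset.sum_nonneg fun j _ => hFterm i j
  have hGnn : 0 ≤ G := Finset.sum_nonneg fun i _ =>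
    Finset.sum_nonneg fun j _ => hGterm i j
  -- sum computations
  have hsum1 : ∑ i, ∑ j, d i * e j * A i j = (n : ℝ) := by
    simp [row2]
  have hsum2 : ∑ i, ∑ j, A i j = (n : ℝ) := by
    simp [row1]
  have hsum3 : ∑ i, ∑ j, A i j * Real.log (d i) = ∑ i, Real.log (d i) := by
    refine Finset.sum_congr rfl fun i _ => ?_
    rw [← Finset.sum_mul, row1 i, one_mul]
  have hsum4 : ∑ i, ∑ j, A i j * Real.log (e j) = ∑ j, Real.log (e j) := by
    rw [Finset.sum_comm]
    refine Finset.sum_congr rfl fun j _ => ?_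
    rw [← Finset.sum_mul, col1 j, one_mul]
  have hsum7 : ∑ i, ∑ j, (d i * e j * A i j) * Real.log (d i) = ∑ i, Real.log (d i) := by
    refine Finset.sum_congr rfl fun i _ => ?_
    rw [← Finset.sum_mul, row2 i, one_mul]
  have hsum8 : ∑ i, ∑ j, (d i * e j * A i j) * Real.log (e j) = ∑ j, Real.log (e j) := by
    rw [Finset.sum_comm]
    refine Finset.sum_congr rfl fun j _ => ?_
    rw [← Finset.sum_mul, col2 j, one_mul]
  have hFval : F = -S := by
    have hterm : ∀ i j, A i j * (d i * e j - 1 - Real.log (d i * e j)) =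
        d i * e j * A i j - A i j - (A i j * Real.log (d i) + A i j * Real.log (e j)) := by
      intro i j
      rw [Real.log_mul (hdpos i).ne' (hepos j).ne']
      ring
    calc F = ∑ i, ∑ j, (d i * e j * A i j - A i j -
          (A i j * Real.log (d i) + A i j * Real.log (e j))) := by
          rw [hF]
          exact Finset.sum_congr rfl fun i _ => Finset.sum_congr rfl fun j _ => hterm i j
      _ = (∑ i, ∑ j, d i * e j * A i j) - (∑ i, ∑ j, A i j) -
          ((∑ i, ∑ j, A i j * Real.log (d i)) + (∑ i, ∑ j, A i j * Real.log (e j))) := by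
          simp [Finset.sum_sub_distrib, Finset.sum_add_distrib]
      _ = -S := by rw [hsum1, hsum2, hsum3, hsum4, hS]; ring
  have hGval : G = S := by
    have hterm : ∀ i j, (d i * e j * A i j) * ((d i * e j)⁻¹ - 1 - Real.log (d i * e j)⁻¹) =
        A i j - d i * e j * A i j +
          ((d i * e j * A i j) * Real.log (d i) + (d i * e j * A i j) * Real.log (e j)) := by
      intro i j
      have hcancel : d i * e j * (d i * e j)⁻¹ = 1 := mul_inv_cancel₀ (hde i j).ne'
      rw [Real.log_inv, Real.log_mul (hdpos i).ne' (hepos j).ne']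
      linear_combination A i j * hcancel
    calc G = ∑ i, ∑ j, (A i j - d i * e j * A i j +
          ((d i * e j * A i j) * Real.log (d i) + (d i * e j * A i j) * Real.log (e j))) := by
          rw [hG]
          exact Finset.sum_congr rfl fun i _ => Finset.sum_congr rfl fun j _ => hterm i j
      _ = (∑ i, ∑ j, A i j) - (∑ i, ∑ j, d i * e j * A i j) +
          ((∑ i, ∑ j, (d i * e j * A i j) * Real.log (d i)) +
           (∑ i, ∑ j, (d i * e j * A i j) * Real.log (e j))) := by
          simp [Finset.sum_sub_distrib, Finset.sum_add_distrib]
      _ = S := by rw [hsum1, hsum2, hsum7, hsum8, hS]; ring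
  have hF0 : F = 0 := by linarith [hFnn, hGnn, hFval, hGval]
  -- each term of F is zero
  have hterm0 : ∀ i j, A i j * (d i * e j - 1 - Real.log (d i * e j)) = 0 := by
    intro i j
    have hrow : ∀ i ∈ Finset.univ (α := Fin n),
        0 ≤ ∑ j, A i j * (d i * e j - 1 - Real.log (d i * e j)) :=
      fun i _ => Finset.sum_nonneg fun j _ => hFterm i j
    have hi : ∑ j, A i j * (d i * e j - 1 - Real.log (d i * e j)) = 0 :=
      (Finset.sum_eq_zero_iff_of_nonneg hrow).mp hF0 i (Finset.mem_univ i)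
    exact (Finset.sum_eq_zero_iff_of_nonneg (fun j _ => hFterm i j)).mp hi j (Finset.mem_univ j)
  -- conclude
  ext i j
  rw [hent, hent]
  rcases mul_eq_zero.mp (hterm0 i j) with hz | hz
  · have hBz : B i j = 0 := by
      have : r₁ i * B i j * c₁ j = 0 := hz
      have h1 := (hr₁ i).ne'
      have h2 := (hc₁ j).ne'
      rcases mul_eq_zero.mp this with h | h
      · rcases mul_eq_zero.mp h with h' | h'
        · exact absurd h' h1
        · exact h'
      · exact absurd h h2
    simp [hBz]
  · have hde1 : d i * e j = 1 := phi_eq_zero (hde i j) hz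
    have key : r₂ i * c₂ j = r₁ i * c₁ j := by
      have := hde1
      simp only [hd, he] at this
      field_simp at this
      rwa [div_eq_one_iff_eq (mul_ne_zero (hr₁ i).ne' (hc₁ j).ne')] at this
    linear_combination -(B i j) * key
end

section
/- If B is a nonnegative fully indecomposable n×n matrix and R₁ B C₁ and R₂ B C₂ are both doubly stochastic with R_k, C_k positive diagonal matrices, then there is a positive scalar α such that R₂ = α R₁ and C₂ = α^{-1} C₁. -/
/-- Sinkhorn–Knopp, part 3: for a fully indecomposable nonnegative matrix, the
scaling matrices are unique up to a scalar multiple. -/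
theorem stmt_10 (n : ℕ) (B : Matrix (Fin n) (Fin n) ℝ)
    (hB : ∀ i j, 0 ≤ B i j) (hfi : FullyIndecomposable B)
    (r₁ c₁ r₂ c₂ : Fin n → ℝ)
    (hr₁ : ∀ i, 0 < r₁ i) (hc₁ : ∀ j, 0 < c₁ j)
    (hr₂ : ∀ i, 0 < r₂ i) (hc₂ : ∀ j, 0 < c₂ j)
    (h₁ : IsDoublyStochastic (Matrix.diagonal r₁ * B * Matrix.diagonal c₁))
    (h₂ : IsDoublyStochastic (Matrix.diagonal r₂ * B * Matrix.diagonal c₂)) :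
    ∃ α : ℝ, 0 < α ∧ (∀ i, r₂ i = α * r₁ i) ∧ (∀ j, c₂ j = α⁻¹ * c₁ j) := by
  classical
  rcases Nat.eq_zero_or_pos n with hn | hn
  · exact ⟨1, one_pos, fun i => absurd i.2 (by omega), fun j => absurd j.2 (by omega)⟩
  haveI : Nonempty (Fin n) := ⟨⟨0, hn⟩⟩
  obtain ⟨h1nn, h1row, h1col⟩ := h₁
  obtain ⟨h2nn, h2row, h2col⟩ := h₂
  simp only [Matrix.mul_diagonal, Matrix.diagonal_mul] at h1row h1col h2row h2col
  set x : Fin n → ℝ := fun i => r₂ i / r₁ i with hxdef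
  set y : Fin n → ℝ := fun j => c₂ j / c₁ j with hydef
  set A : Fin n → Fin n → ℝ := fun i j => r₁ i * B i j * c₁ j with hAdef
  have hxpos : ∀ i, 0 < x i := fun i => div_pos (hr₂ i) (hr₁ i)
  have hypos : ∀ j, 0 < y j := fun j => div_pos (hc₂ j) (hc₁ j)
  have hAnn : ∀ i j, 0 ≤ A i j := fun i j =>
    mul_nonneg (mul_nonneg (hr₁ i).le (hB i j)) (hc₁ j).le
  have hA0 : ∀ i j, A i j = 0 ↔ B i j = 0 := by
    intro i j
    simp only [hAdef, mul_eq_zero]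
    constructor
    · rintro ((h | h) | h)
      · exact absurd h (hr₁ i).ne'
      · exact h
      · exact absurd h (hc₁ j).ne'
    · intro h; exact Or.inl (Or.inr h)
  have rows1 : ∀ i, ∑ j, A i j = 1 := h1row
  have cols1 : ∀ j, ∑ i, A i j = 1 := h1col
  have key : ∀ i j, x i * A i j * y j = r₂ i * B i j * c₂ j := by
    intro i j
    have h1 := (hr₁ i).ne'
    have h2 := (hc₁ j).ne'
    simp only [hxdef, hydef, hAdef]
    field_simp
  have rows2 : ∀ i, ∑ j, x i * A i j * y j = 1 := by
    intro i
    rw [Finset.sum_congr rfl fun j _ => key i j]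
    exact h2row i
  have cols2 : ∀ j, ∑ i, x i * A i j * y j = 1 := by
    intro j
    rw [Finset.sum_congr rfl fun i _ => key i j]
    exact h2col j
  obtain ⟨i₀, -, hi₀⟩ := Finset.exists_max_image Finset.univ x Finset.univ_nonempty
  obtain ⟨j₀, -, hj₀⟩ := Finset.exists_min_image Finset.univ y Finset.univ_nonempty
  set α := x i₀ with hαdef
  set β := y j₀ with hβdef
  have hαpos : 0 < α := hxpos i₀
  have hβpos : 0 < β := hypos j₀
  have hxle : ∀ i, x i ≤ α := fun i => hi₀ i (Finset.mem_univ i)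
  have hyge : ∀ j, β ≤ y j := fun j => hj₀ j (Finset.mem_univ j)
  -- Step 1 : for every j, 1 ≤ α * y j
  have step1 : ∀ j, 1 ≤ α * y j := by
    intro j
    have hle : ∑ i, x i * A i j * y j ≤ ∑ i, α * A i j * y j :=
      Finset.sum_le_sum fun i _ =>
        mul_le_mul_of_nonneg_right
          (mul_le_mul_of_nonneg_right (hxle i) (hAnn i j)) (hypos j).le
    have heq : ∑ i, α * A i j * y j = α * y j := by
      have : ∑ i, α * A i j * y j = (α * y j) * ∑ i, A i j := by
        rw [Finset.mul_sum]
        exact Finset.sum_congr rfl fun i _ => by ring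
      rw [this, cols1 j, mul_one]
    calc 1 = ∑ i, x i * A i j * y j := (cols2 j).symm
      _ ≤ ∑ i, α * A i j * y j := hle
      _ = α * y j := heq
  -- α * β = 1
  have hrow_ge : ∀ i, x i = α → ∑ j, α * A i j * β ≤ ∑ j, x i * A i j * y j := by
    intro i hxi
    refine Finset.sum_le_sum fun j _ => ?_
    rw [hxi]
    exact mul_le_mul_of_nonneg_left (hyge j) (mul_nonneg hαpos.le (hAnn i j))
  have hsumβ : ∀ i, ∑ j, α * A i j * β = α * β := by
    intro i
    have : ∑ j, α * A i j * β = (α * β) * ∑ j, A i j := by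
      rw [Finset.mul_sum]
      exact Finset.sum_congr rfl fun j _ => by ring
    rw [this, rows1 i, mul_one]
  have hab : α * β = 1 := by
    have h1 : α * β ≤ 1 := by
      calc α * β = ∑ j, α * A i₀ j * β := (hsumβ i₀).symm
        _ ≤ ∑ j, x i₀ * A i₀ j * y j := hrow_ge i₀ rfl
        _ = 1 := rows2 i₀
    linarith [step1 j₀]
  -- key structural facts
  have rowkey : ∀ i, x i = α → ∀ j, A i j ≠ 0 → y j = β := by
    intro i hxi j hAij
    have hsum : ∑ j, α * A i j * β = ∑ j, x i * A i j * y j := by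
      rw [hsumβ i, hab, rows2 i]
    have hle : ∀ j ∈ Finset.univ, α * A i j * β ≤ x i * A i j * y j := fun j _ => by
      rw [hxi]
      exact mul_le_mul_of_nonneg_left (hyge j) (mul_nonneg hαpos.le (hAnn i j))
    have heach := (Finset.sum_eq_sum_iff_of_le hle).mp hsum j (Finset.mem_univ j)
    rw [hxi] at heach
    have hαA : α * A i j ≠ 0 := mul_ne_zero hαpos.ne' hAij
    exact (mul_left_cancel₀ hαA heach).symm
  have colkey : ∀ j, y j = β → ∀ i, A i j ≠ 0 → x i = α := by
    intro j hyj i hAij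
    have hsum : ∑ i, x i * A i j * y j = ∑ i, α * A i j * y j := by
      rw [cols2 j]
      have : ∑ i, α * A i j * y j = (α * y j) * ∑ i, A i j := by
        rw [Finset.mul_sum]
        exact Finset.sum_congr rfl fun i _ => by ring
      rw [this, cols1 j, mul_one, hyj, hab]
    have hle : ∀ i ∈ Finset.univ, x i * A i j * y j ≤ α * A i j * y j := fun i _ =>
      mul_le_mul_of_nonneg_right
        (mul_le_mul_of_nonneg_right (hxle i) (hAnn i j)) (hypos j).le
    have heach := (Finset.sum_eq_sum_iff_of_le hle).mp hsum i (Finset.mem_univ i)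
    have hAy : A i j * y j ≠ 0 := mul_ne_zero hAij (hypos j).ne'
    have : (x i - α) * (A i j * y j) = 0 := by linarith [heach]
    rcases mul_eq_zero.mp this with h | h
    · linarith
    · exact absurd h hAy
  set S : Finset (Fin n) := Finset.univ.filter (fun i => x i = α) with hSdef
  set T : Finset (Fin n) := Finset.univ.filter (fun j => y j = β) with hTdef
  have hSmem : ∀ i, i ∈ S ↔ x i = α := fun i => by simp [hSdef]
  have hTmem : ∀ j, j ∈ T ↔ y j = β := fun j => by simp [hTdef]
  have hSne : S.Nonempty := ⟨i₀, (hSmem i₀).mpr rfl⟩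
  have hTne : T.Nonempty := ⟨j₀, (hTmem j₀).mpr rfl⟩
  have hzero1 : ∀ i ∈ S, ∀ j, j ∉ T → B i j = 0 := by
    intro i hi j hj
    by_contra hb
    exact hj ((hTmem j).mpr (rowkey i ((hSmem i).mp hi) j (fun h => hb ((hA0 i j).mp h))))
  have hzero2 : ∀ i, i ∉ S → ∀ j ∈ T, B i j = 0 := by
    intro i hi j hj
    by_contra hb
    exact hi ((hSmem i).mpr (colkey j ((hTmem j).mp hj) i (fun h => hb ((hA0 i j).mp h))))
  -- S = univ or T = univ
  have hcardn : Fintype.card (Fin n) = n := Fintype.card_fin n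
  have huniv : S = Finset.univ ∨ T = Finset.univ := by
    by_contra hcon
    push_neg at hcon
    obtain ⟨hS, hT⟩ := hcon
    have hScne : Sᶜ.Nonempty := by
      rw [Finset.nonempty_iff_ne_empty, ne_eq, Finset.compl_eq_empty_iff]
      exact hS
    have hTcne : Tᶜ.Nonempty := by
      rw [Finset.nonempty_iff_ne_empty, ne_eq, Finset.compl_eq_empty_iff]
      exact hT
    have hSlt : S.card < n := by
      have := Finset.card_lt_card (Finset.ssubset_univ_iff.mpr hS)
      simpa [hcardn] using this
    have hTlt : T.card < n := by
      have := Finset.card_lt_card (Finset.ssubset_univ_iff.mpr hT)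
      simpa [hcardn] using this
    have hSc : Sᶜ.card = n - S.card := by rw [Finset.card_compl, hcardn]
    have hTc : Tᶜ.card = n - T.card := by rw [Finset.card_compl, hcardn]
    rcases le_or_gt T.card S.card with hc | hc
    · -- use S and a subset of Tᶜ
      have hle : n - S.card ≤ Tᶜ.card := by omega
      obtain ⟨T', hT'sub, hT'card⟩ := Finset.exists_subset_card_eq hle
      have hT'ne : T'.Nonempty := Finset.card_pos.mp (by omega)
      refine hfi ⟨S, T', hSne, hT'ne, by omega, ?_⟩
      intro i hi j hj
      exact hzero1 i hi j (fun h => (Finset.mem_compl.mp (hT'sub hj)) h)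
    · -- use a subset of Sᶜ and T
      have hle : n - T.card ≤ Sᶜ.card := by omega
      obtain ⟨S', hS'sub, hS'card⟩ := Finset.exists_subset_card_eq hle
      have hS'ne : S'.Nonempty := Finset.card_pos.mp (by omega)
      refine hfi ⟨S', T, hS'ne, hTne, by omega, ?_⟩
      intro i hi j hj
      exact hzero2 i (fun h => (Finset.mem_compl.mp (hS'sub hi)) h) j hj
  -- conclude x ≡ α and y ≡ β
  have hxall : ∀ i, x i = α := by
    rcases huniv with h | h
    · intro i
      exact (hSmem i).mp (h ▸ Finset.mem_univ i)
    · intro i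
      have hyall : ∀ j, y j = β := fun j => (hTmem j).mp (h ▸ Finset.mem_univ j)
      have : ∑ j, x i * A i j * y j = x i * β := by
        have : ∑ j, x i * A i j * y j = (x i * β) * ∑ j, A i j := by
          rw [Finset.mul_sum]
          exact Finset.sum_congr rfl fun j _ => by rw [hyall j]; ring
        rw [this, rows1 i, mul_one]
      have h1 : x i * β = 1 := by rw [← this, rows2 i]
      have : x i * β = α * β := by rw [h1, hab]
      exact mul_right_cancel₀ hβpos.ne' this
  have hyall : ∀ j, y j = β := by
    intro j
    have h1 : α * y j = 1 := by
      have : ∑ i, x i * A i j * y j = α * y j := by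
        have : ∑ i, x i * A i j * y j = (α * y j) * ∑ i, A i j := by
          rw [Finset.mul_sum]
          exact Finset.sum_congr rfl fun i _ => by rw [hxall i]; ring
        rw [this, cols1 j, mul_one]
      rw [← this, cols2 j]
    have : α * y j = α * β := by rw [h1, hab]
    exact mul_left_cancel₀ hαpos.ne' this
  have hβinv : α⁻¹ = β := inv_eq_of_mul_eq_one_right hab
  refine ⟨α, hαpos, fun i => ?_, fun j => ?_⟩
  · have h : r₂ i / r₁ i = α := hxall i
    exact (div_eq_iff (hr₁ i).ne').mp h
  · have h : c₂ j / c₁ j = α⁻¹ := by rw [hβinv]; exact hyall j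
    exact (div_eq_iff (hc₁ j).ne').mp h
end

section
/- Let A be an n×n symmetric positive definite matrix with unit diagonal (i.e., already Jacobi scaled). Then κ(A) ≤ n · min_D κ(D A D), where the minimum is over positive diagonal matrices D and κ denotes the 2-norm condition number. -/
/-- The 2-norm condition number `κ(M) = ‖M‖₂ ‖M⁻¹‖₂`, via the operator norm on
Euclidean space. -/
noncomputable def kappa {n : ℕ} (M : Matrix (Fin n) (Fin n) ℝ) : ℝ :=
  ‖Matrix.toEuclideanCLM (𝕜 := ℝ) M‖ * ‖Matrix.toEuclideanCLM (𝕜 := ℝ) M⁻¹‖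

/-!
Positive semidefiniteness gives `A i j ^ 2 ≤ A i i * A j j`, so the Frobenius norm of `A`, and
with it `‖A‖₂`, is at most `tr A = n`. For `B = D A D` we have `A⁻¹ = D B⁻¹ D`, hence
`‖A⁻¹‖₂ ≤ (max dᵢ)² ‖B⁻¹‖₂`; and each `dᵢ² = B i i` is at most `‖B‖₂`.
-/

open scoped Matrix.Norms.L2Operator

namespace Matrix

section Rectangular

variable {m n : Type*} [Fintype m] [Fintype n] [DecidableEq n]

lemma norm_apply_le_l2_opNorm {𝕜 : Type*} [RCLike 𝕜] (M : Matrix m n 𝕜) (i : m) (j : n) :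
    ‖M i j‖ ≤ ‖M‖ := by
  have h := M.l2_opNorm_mulVec (EuclideanSpace.single j 1)
  rw [PiLp.norm_single, norm_one, mul_one] at h
  refine le_trans (le_of_eq ?_) ((PiLp.norm_apply_le _ i).trans h)
  simp

lemma l2_opNorm_le_sqrt_sum_sq (M : Matrix m n ℝ) : ‖M‖ ≤ √(∑ i, ∑ j, M i j ^ 2) := by
  refine ContinuousLinearMap.opNorm_le_bound _ (by positivity) fun x ↦ ?_
  refine (sq_le_sq₀ (by positivity) (by positivity)).mp ?_
  rw [mul_pow, Real.sq_sqrt (by positivity), EuclideanSpace.norm_sq_eq, EuclideanSpace.norm_sq_eq,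
    Finset.sum_mul]
  refine Finset.sum_le_sum fun i _ ↦ ?_
  simpa [mulVec, dotProduct] using Finset.sum_mul_sq_le_sq_mul_sq Finset.univ (M i) x

end Rectangular

variable {n : Type*} [Fintype n] [DecidableEq n]

lemma PosSemidef.apply_sq_le {A : Matrix n n ℝ} (hA : A.PosSemidef) (i j : n) :
    A i j ^ 2 ≤ A i i * A j j := by
  have hsymm : A.toBilin'.IsSymm :=
    isSymm_toBilin'_iff_isSymm.mpr (isHermitian_iff_isSymm.mp hA.isHermitian)
  have hnonneg : ∀ x, 0 ≤ A.toBilin' x x := fun x ↦ by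
    simpa [toBilin'_apply'] using hA.dotProduct_mulVec_nonneg x
  simpa using A.toBilin'.apply_sq_le_of_symm hnonneg (LinearMap.BilinForm.isSymm_iff.mp hsymm)
    (Pi.single i 1) (Pi.single j 1)

lemma PosSemidef.l2_opNorm_le_trace {A : Matrix n n ℝ} (hA : A.PosSemidef) : ‖A‖ ≤ A.trace := by
  calc ‖A‖ ≤ √(∑ i, ∑ j, A i j ^ 2) := A.l2_opNorm_le_sqrt_sum_sq
    _ ≤ √(∑ i, ∑ j, A i i * A j j) :=
        Real.sqrt_le_sqrt <| Finset.sum_le_sum fun i _ ↦ Finset.sum_le_sum fun j _ ↦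
          hA.apply_sq_le i j
    _ = A.trace := by
        rw [← Finset.sum_mul_sum, ← sq]
        exact Real.sqrt_sq hA.trace_nonneg

lemma inv_eq_mul_inv_mul_of_isUnit {R : Type*} [CommRing R] (A : Matrix n n R)
    {D : Matrix n n R} (hD : IsUnit D.det) : A⁻¹ = D * (D * A * D)⁻¹ * D := by
  rw [mul_inv_rev, mul_inv_rev, ← mul_assoc, ← mul_assoc, mul_nonsing_inv _ hD, one_mul,
    mul_assoc, nonsing_inv_mul _ hD, mul_one]

lemma norm_sq_le_l2_opNorm_diagonal_mul_mul_diagonal {A : Matrix n n ℝ} (hdiag : ∀ i, A i i = 1)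
    (d : n → ℝ) : ‖d‖ ^ 2 ≤ ‖diagonal d * A * diagonal d‖ := by
  set B := diagonal d * A * diagonal d
  have hB : ∀ i, d i ^ 2 ≤ ‖B‖ := fun i ↦
    calc d i ^ 2 = B i i := by simp [B, hdiag, sq]
      _ ≤ ‖B i i‖ := Real.le_norm_self _
      _ ≤ ‖B‖ := B.norm_apply_le_l2_opNorm i i
  have hd : ‖d‖ ≤ √‖B‖ :=
    (pi_norm_le_iff_of_nonneg (Real.sqrt_nonneg _)).mpr fun i ↦ Real.abs_le_sqrt (hB i)
  exact (Real.le_sqrt (norm_nonneg d) (norm_nonneg B)).mp hd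

end Matrix

/-- Van der Sluis, Theorem 4.1: if `A` is symmetric positive definite with unit
diagonal, then `κ(A) ≤ n ⋅ min_D κ(D A D)` over positive diagonal `D`. -/
theorem stmt_13 (n : ℕ) (A : Matrix (Fin n) (Fin n) ℝ)
    (hA : A.PosDef) (hdiag : ∀ i, A i i = 1) :
    ∀ d : Fin n → ℝ, (∀ i, 0 < d i) →
      kappa A ≤ n * kappa (Matrix.diagonal d * A * Matrix.diagonal d) := by
  intro d hd
  set B := Matrix.diagonal d * A * Matrix.diagonal d
  have hdet : IsUnit (Matrix.diagonal d).det := by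
    simpa [Matrix.det_diagonal] using Finset.prod_ne_zero_iff.mpr fun i _ ↦ (hd i).ne'
  have hA_norm : ‖A‖ ≤ n := by
    simpa [Matrix.trace, hdiag] using hA.posSemidef.l2_opNorm_le_trace
  have hAinv_norm : ‖A⁻¹‖ ≤ ‖B‖ * ‖B⁻¹‖ :=
    calc ‖A⁻¹‖ = ‖Matrix.diagonal d * B⁻¹ * Matrix.diagonal d‖ := by
          rw [A.inv_eq_mul_inv_mul_of_isUnit hdet]
      _ ≤ ‖d‖ * ‖B⁻¹‖ * ‖d‖ := by
          grw [norm_mul_le, norm_mul_le, Matrix.l2_opNorm_diagonal]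
      _ = ‖d‖ ^ 2 * ‖B⁻¹‖ := by ring
      _ ≤ ‖B‖ * ‖B⁻¹‖ := by grw [Matrix.norm_sq_le_l2_opNorm_diagonal_mul_mul_diagonal hdiag d]
  change ‖A‖ * ‖A⁻¹‖ ≤ n * (‖B‖ * ‖B⁻¹‖)
  gcongr
end

section
/- Suppose the nonnegative matrix B is doubly stochastically scalable by R B C with R = diag(r), C = diag(c) positive diagonal, and B is symmetric. If I is the index set of an irreducible diagonal block of B (after symmetric permutation to block-diagonal irreducible form), then the restriction of r to I is proportional to the restriction of c to I, and with x = √(r c) (element-wise), diag(x) B diag(x) is doubly stochastic. -/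
/-!
Put `S = diag r * B * diag c` and `t = r / c`. Symmetry of `B` gives `t i * S j i = t j * S i j`,
which turns the column sums of `S` into `S t = t`. For a doubly stochastic `S` with `S t = t` the
energy `∑ i j, S i j * (t i - t j) ^ 2` expands to `∑ t² - 2 ∑ t² + ∑ t² = 0`, so `t` is constant
along the nonzero entries of `B`, hence on an irreducible block. It also gives `r i c j = r j c i`
wherever `B i j ≠ 0`, so `√(r i c i) √(r j c j) = r i c j` there and `diag x * B * diag x = S`.
-/

open Finset Matrix

section DoublyStochastic

variable {R ι : Type*} [CommRing R] [LinearOrder R] [IsStrictOrderedRing R]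
  [Fintype ι] [DecidableEq ι] {M : Matrix ι ι R} {t : ι → R}

theorem Matrix.sum_mul_sub_sq_eq_zero_of_mulVec_eq (hM : M ∈ doublyStochastic R ι)
    (ht : M *ᵥ t = t) : ∑ i, ∑ j, M i j * (t i - t j) ^ 2 = 0 := by
  have hrow : ∑ i, ∑ j, M i j * t i ^ 2 = ∑ i, t i ^ 2 := by
    simp only [← Finset.sum_mul, sum_row_of_mem_doublyStochastic hM, one_mul]
  have hcol : ∑ i, ∑ j, M i j * t j ^ 2 = ∑ j, t j ^ 2 := by
    rw [Finset.sum_comm]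
    simp only [← Finset.sum_mul, sum_col_of_mem_doublyStochastic hM, one_mul]
  have hmid : ∑ i, ∑ j, M i j * (t i * t j) = ∑ i, t i ^ 2 := by
    refine Finset.sum_congr rfl fun i _ => ?_
    have := congrFun ht i
    simp only [mulVec, dotProduct] at this
    rw [sq, ← this, Finset.mul_sum]
    exact Finset.sum_congr rfl fun j _ => by ring
  calc ∑ i, ∑ j, M i j * (t i - t j) ^ 2
      = ∑ i, ∑ j, M i j * t i ^ 2 - 2 * ∑ i, ∑ j, M i j * (t i * t j)
          + ∑ i, ∑ j, M i j * t j ^ 2 := by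
        simp only [Finset.mul_sum, ← Finset.sum_sub_distrib, ← Finset.sum_add_distrib]
        exact Finset.sum_congr rfl fun i _ => Finset.sum_congr rfl fun j _ => by ring
    _ = 0 := by rw [hrow, hmid, hcol]; ring

theorem Matrix.eq_of_mulVec_eq_of_ne_zero (hM : M ∈ doublyStochastic R ι)
    (ht : M *ᵥ t = t) {i j : ι} (hij : M i j ≠ 0) : t i = t j := by
  have hnonneg : ∀ k l, 0 ≤ M k l * (t k - t l) ^ 2 := fun k l =>
    mul_nonneg (nonneg_of_mem_doublyStochastic hM) (sq_nonneg _)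
  have hzero := sum_mul_sub_sq_eq_zero_of_mulVec_eq hM ht
  rw [Finset.sum_eq_zero_iff_of_nonneg fun k _ => Finset.sum_nonneg fun l _ => hnonneg k l]
    at hzero
  have := (Finset.sum_eq_zero_iff_of_nonneg fun l _ => hnonneg i l).1
    (hzero i (mem_univ i)) j (mem_univ j)
  simpa [hij, sub_eq_zero] using this

end DoublyStochastic

theorem forall_mem_eq_of_irreducible {ι α : Type*} [DecidableEq ι] {adj : ι → ι → Prop}
    {I : Finset ι} (hirr : ∀ S ⊆ I, S.Nonempty → S ≠ I → ∃ i ∈ S, ∃ j ∈ I \ S, adj i j)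
    {f : ι → α} (hf : ∀ i j, adj i j → f i = f j) {i₀ : ι} (hi₀ : i₀ ∈ I) :
    ∀ i ∈ I, f i = f i₀ := by
  classical
  by_contra! ⟨k, hkI, hk⟩
  set S := I.filter (fun i => f i = f i₀)
  have hproper : S ≠ I := fun h =>
    hk (mem_filter.1 ((Finset.ext_iff.1 h k).2 hkI)).2
  obtain ⟨i, hi, j, hj, hij⟩ :=
    hirr S (filter_subset _ I) ⟨i₀, mem_filter.2 ⟨hi₀, rfl⟩⟩ hproper
  rw [mem_sdiff, mem_filter, not_and] at hj
  exact hj.2 hj.1 ((hf i j hij).symm.trans (mem_filter.1 hi).2)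

section Scaling

variable {R ι : Type*} [Field R] [LinearOrder R] [IsStrictOrderedRing R]
  [Fintype ι] [DecidableEq ι] {B : Matrix ι ι R} {r c : ι → R}

theorem Matrix.IsSymm.mulVec_div_eq_div (hB : B.IsSymm) (hc : ∀ j, c j ≠ 0)
    (hM : diagonal r * B * diagonal c ∈ doublyStochastic R ι) :
    (diagonal r * B * diagonal c) *ᵥ (fun i => r i / c i) = fun i => r i / c i := by
  ext i
  have hcol := sum_col_of_mem_doublyStochastic hM i
  simp only [mul_diagonal, diagonal_mul] at hcol
  calc ((diagonal r * B * diagonal c) *ᵥ fun i => r i / c i) i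
      = r i / c i * ∑ j, r j * B j i * c i := by
        simp only [mulVec, dotProduct, mul_diagonal, diagonal_mul, Finset.mul_sum]
        refine Finset.sum_congr rfl fun j _ => ?_
        rw [← hB.apply i j]
        field_simp [hc i, hc j]
    _ = r i / c i := by rw [hcol, mul_one]

theorem Matrix.IsSymm.div_eq_div_of_mem_doublyStochastic (hB : B.IsSymm)
    (hr : ∀ i, r i ≠ 0) (hc : ∀ j, c j ≠ 0)
    (hM : diagonal r * B * diagonal c ∈ doublyStochastic R ι) {i j : ι} (hij : B i j ≠ 0) :
    r i / c i = r j / c j :=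
  eq_of_mulVec_eq_of_ne_zero hM (hB.mulVec_div_eq_div hc hM) <| by
    simpa [mul_diagonal, diagonal_mul] using ⟨⟨hr i, hij⟩, hc j⟩

end Scaling

theorem Matrix.diagonal_sqrt_mul_mul_diagonal_sqrt {ι : Type*} [Fintype ι] [DecidableEq ι]
    {B : Matrix ι ι ℝ} {r c : ι → ℝ} (hr : ∀ i, 0 ≤ r i) (hc : ∀ i, 0 < c i)
    (hratio : ∀ i j, B i j ≠ 0 → r i / c i = r j / c j) :
    diagonal (fun i => √(r i * c i)) * B * diagonal (fun i => √(r i * c i)) =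
      diagonal r * B * diagonal c := by
  ext i j
  simp only [mul_diagonal, diagonal_mul]
  rcases eq_or_ne (B i j) 0 with hij | hij
  · simp [hij]
  have hcross : r i * c j = r j * c i :=
    (div_eq_div_iff (hc i).ne' (hc j).ne').1 (hratio i j hij)
  have hsqrt : √(r i * c i) * √(r j * c j) = r i * c j := by
    rw [← Real.sqrt_mul (mul_nonneg (hr i) (hc i).le),
      show r i * c i * (r j * c j) = (r i * c j) ^ 2 by
        linear_combination (r i * c j) * hcross.symm,
      Real.sqrt_sq (mul_nonneg (hr i) (hc j).le)]
  linear_combination B i j * hsqrt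

theorem isDoublyStochastic_iff_mem_doublyStochastic {n : ℕ} {M : Matrix (Fin n) (Fin n) ℝ} :
    IsDoublyStochastic M ↔ M ∈ doublyStochastic ℝ (Fin n) :=
  mem_doublyStochastic_iff_sum.symm

theorem stmt_15_general (n : ℕ) (B : Matrix (Fin n) (Fin n) ℝ)
    (hsym : B.IsSymm)
    (r c : Fin n → ℝ) (hr : ∀ i, 0 < r i) (hc : ∀ j, 0 < c j)
    (hds : IsDoublyStochastic (Matrix.diagonal r * B * Matrix.diagonal c))
    (I : Finset (Fin n))
    (hirr : ∀ S ⊆ I, S.Nonempty → S ≠ I → ∃ i ∈ S, ∃ j ∈ I \ S, B i j ≠ 0) :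
    (∃ α : ℝ, 0 < α ∧ ∀ i ∈ I, r i = α * c i) ∧
    IsDoublyStochastic
      (Matrix.diagonal (fun i => Real.sqrt (r i * c i)) * B *
        Matrix.diagonal (fun i => Real.sqrt (r i * c i))) := by
  have hM := isDoublyStochastic_iff_mem_doublyStochastic.1 hds
  have hratio : ∀ i j, B i j ≠ 0 → r i / c i = r j / c j := fun i j =>
    hsym.div_eq_div_of_mem_doublyStochastic (fun i => (hr i).ne') (fun j => (hc j).ne') hM
  refine ⟨?_, ?_⟩
  · rcases I.eq_empty_or_nonempty with rfl | ⟨i₀, hi₀⟩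
    · exact ⟨1, one_pos, by simp⟩
    refine ⟨r i₀ / c i₀, div_pos (hr i₀) (hc i₀), fun i hi => ?_⟩
    rw [← forall_mem_eq_of_irreducible hirr hratio hi₀ i hi, div_mul_cancel₀ _ (hc i).ne']
  · rwa [diagonal_sqrt_mul_mul_diagonal_sqrt (fun i => (hr i).le) hc hratio]

/-- If the nonnegative symmetric matrix `B` is scaled to a doubly stochastic
matrix by positive diagonal matrices `R = diag r`, `C = diag c`, and `I` is the
index set of an irreducible diagonal block of `B` (the block is decoupled from
the other indices and irreducible), then `r` restricted to `I` is proportional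
to `c` restricted to `I`; and with `x = √(r c)` elementwise, `diag x * B * diag x`
is doubly stochastic. -/
theorem stmt_15 (n : ℕ) (B : Matrix (Fin n) (Fin n) ℝ)
    (hB : ∀ i j, 0 ≤ B i j) (hsym : B.IsSymm)
    (r c : Fin n → ℝ) (hr : ∀ i, 0 < r i) (hc : ∀ j, 0 < c j)
    (hds : IsDoublyStochastic (Matrix.diagonal r * B * Matrix.diagonal c))
    (I : Finset (Fin n))
    (hblock : ∀ i ∈ I, ∀ j ∉ I, B i j = 0)
    (hirr : ∀ S ⊆ I, S.Nonempty → S ≠ I → ∃ i ∈ S, ∃ j ∈ I \ S, B i j ≠ 0) :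
    (∃ α : ℝ, 0 < α ∧ ∀ i ∈ I, r i = α * c i) ∧
    IsDoublyStochastic
      (Matrix.diagonal (fun i => Real.sqrt (r i * c i)) * B *
        Matrix.diagonal (fun i => Real.sqrt (r i * c i))) :=
  stmt_15_general n B hsym r c hr hc hds I hirr
end

section
/- Let B be the 2×2 diagonal matrix diag(1, 2) and apply the symmetric Sinkhorn–Knopp iteration x^{k+1} = (B x^k)^{-1} (element-wise reciprocal) starting at x^0 = e. Then the even iterates equal e = (1,1)^T and the odd iterates equal v = (1, 1/2)^T for all k, and with x = √(e ∘ v) = (1, 1/√2)^T the matrix diag(x) B diag(x) is doubly stochastic. -/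
/-- For `B = diag(1,2)`, the symmetric Sinkhorn–Knopp iteration
`x^{k+1} = (B x^k)⁻¹` (elementwise reciprocal) started at `x⁰ = e` has even
iterates `e = (1,1)ᵀ` and odd iterates `v = (1, 1/2)ᵀ`, and with
`x = √(e ∘ v) = (1, 1/√2)ᵀ` the matrix `diag x * B * diag x` is doubly
stochastic. -/
theorem stmt_16 (B : Matrix (Fin 2) (Fin 2) ℝ)
    (hB : B = Matrix.diagonal ![1, 2])
    (x : ℕ → Fin 2 → ℝ) (h0 : x 0 = ![1, 1])
    (hit : ∀ k, x (k + 1) = fun i => (B.mulVec (x k) i)⁻¹) :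
    (∀ k, x (2 * k) = ![1, 1] ∧ x (2 * k + 1) = ![1, 1 / 2]) ∧
    IsDoublyStochastic
      (Matrix.diagonal (fun i => Real.sqrt ((![1, 1] : Fin 2 → ℝ) i *
          (![1, 1 / 2] : Fin 2 → ℝ) i)) * B *
        Matrix.diagonal (fun i => Real.sqrt ((![1, 1] : Fin 2 → ℝ) i *
          (![1, 1 / 2] : Fin 2 → ℝ) i))) := by
  subst hB
  have step : ∀ k (y : Fin 2 → ℝ), x k = y →
      x (k + 1) = fun i => ((Matrix.diagonal ![1, 2]).mulVec y i)⁻¹ := by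
    intro k y hy; rw [hit k, hy]
  have h1 : ∀ k, x (2 * k) = ![1, 1] ∧ x (2 * k + 1) = ![1, 1 / 2] := by
    intro k
    induction k with
    | zero =>
      constructor
      · simpa using h0
      · rw [show 2 * 0 + 1 = 0 + 1 by ring, hit 0, h0]
        funext i
        fin_cases i <;>
          simp [Matrix.mulVec_diagonal] <;> norm_num
    | succ n ih =>
      obtain ⟨he, ho⟩ := ih
      have h2 : x (2 * n + 2) = ![1, 1] := by
        rw [hit (2 * n + 1), ho]
        funext i
        fin_cases i <;>
          simp [Matrix.mulVec_diagonal] <;> norm_num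
      constructor
      · rw [show 2 * (n + 1) = 2 * n + 2 by ring]; exact h2
      · rw [show 2 * (n + 1) + 1 = (2 * n + 2) + 1 by ring, hit, h2]
        funext i
        fin_cases i <;>
          simp [Matrix.mulVec_diagonal] <;> norm_num
  refine ⟨h1, ?_⟩
  have hM : (Matrix.diagonal (fun i => Real.sqrt ((![1, 1] : Fin 2 → ℝ) i *
          (![1, 1 / 2] : Fin 2 → ℝ) i)) * Matrix.diagonal ![1, 2] *
        Matrix.diagonal (fun i => Real.sqrt ((![1, 1] : Fin 2 → ℝ) i *
          (![1, 1 / 2] : Fin 2 → ℝ) i))) = 1 := by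
    rw [Matrix.diagonal_mul_diagonal, Matrix.diagonal_mul_diagonal]
    have h2 : Real.sqrt 2⁻¹ * Real.sqrt 2⁻¹ = 2⁻¹ :=
      Real.mul_self_sqrt (by norm_num)
    have hfun : (fun i => Real.sqrt ((![1, 1] : Fin 2 → ℝ) i * (![1, 1 / 2] : Fin 2 → ℝ) i) *
        (![1, 2] : Fin 2 → ℝ) i * Real.sqrt ((![1, 1] : Fin 2 → ℝ) i * (![1, 1 / 2] : Fin 2 → ℝ) i))
        = (1 : Fin 2 → ℝ) := by
      funext i
      have hs : Real.sqrt 2 * Real.sqrt 2 = 2 := Real.mul_self_sqrt (by norm_num)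
      have hs0 : Real.sqrt 2 ≠ 0 := by positivity
      fin_cases i <;> simp <;> field_simp <;> nlinarith [hs]
    rw [hfun]
    exact Matrix.diagonal_one
  rw [hM]
  refine ⟨?_, ?_, ?_⟩
  · intro i j
    by_cases h : i = j <;> simp [Matrix.one_apply, h]
  · intro i; fin_cases i <;> simp [Matrix.one_apply, Fin.sum_univ_two]
  · intro j; fin_cases j <;> simp [Matrix.one_apply, Fin.sum_univ_two]
end

section
/- If B is an n×n nonnegative matrix with no zero rows and no zero columns, then scaling first the rows so each row has unit maximum, and then the columns so each column has unit maximum, yields a matrix in which every row maximum and every column maximum equals 1 (i.e., the matrix is equilibrated in the infinity norm after one pass). -/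
/-- If `B` is nonnegative with no zero rows or columns, then scaling the rows so
each row has unit maximum and then the columns so each column has unit maximum
yields a matrix all of whose row maxima and column maxima equal 1. -/
theorem stmt_18 (n : ℕ) (B : Matrix (Fin n) (Fin n) ℝ)
    (hB : ∀ i j, 0 ≤ B i j)
    (hrow : ∀ i, ∃ j, 0 < B i j) (hcol : ∀ j, ∃ i, 0 < B i j)
    (hne : (Finset.univ : Finset (Fin n)).Nonempty)
    (M₁ M : Matrix (Fin n) (Fin n) ℝ)
    (hM₁ : ∀ i j, M₁ i j = B i j / Finset.univ.sup' hne (fun j' => B i j'))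
    (hM : ∀ i j, M i j = M₁ i j / Finset.univ.sup' hne (fun i' => M₁ i' j)) :
    (∀ i, Finset.univ.sup' hne (fun j => M i j) = 1) ∧
    (∀ j, Finset.univ.sup' hne (fun i => M i j) = 1) := by
  -- row maxima of B are positive
  have hr : ∀ i, 0 < Finset.univ.sup' hne (fun j' => B i j') := by
    intro i
    obtain ⟨j, hj⟩ := hrow i
    exact lt_of_lt_of_le hj (Finset.le_sup' _ (Finset.mem_univ j))
  -- M₁ entries in [0,1]
  have hM₁nonneg : ∀ i j, 0 ≤ M₁ i j := by
    intro i j; rw [hM₁]; exact div_nonneg (hB i j) (hr i).le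
  have hM₁le : ∀ i j, M₁ i j ≤ 1 := by
    intro i j; rw [hM₁]
    exact div_le_one_of_le₀ (Finset.le_sup' _ (Finset.mem_univ j)) (hr i).le
  -- column maxima c j of M₁
  set c : Fin n → ℝ := fun j => Finset.univ.sup' hne (fun i' => M₁ i' j) with hc
  have hcpos : ∀ j, 0 < c j := by
    intro j
    obtain ⟨i, hi⟩ := hcol j
    have : 0 < M₁ i j := by
      rw [hM₁]; exact div_pos hi (hr i)
    exact lt_of_lt_of_le this (Finset.le_sup' (fun i' => M₁ i' j) (Finset.mem_univ i))
  have hcle : ∀ j, c j ≤ 1 := by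
    intro j
    apply Finset.sup'_le
    intro i _; exact hM₁le i j
  -- M entries ≤ 1
  have hMle : ∀ i j, M i j ≤ 1 := by
    intro i j; rw [hM]
    exact div_le_one_of_le₀ (Finset.le_sup' (fun i' => M₁ i' j) (Finset.mem_univ i)) (hcpos j).le
  constructor
  · intro i
    apply le_antisymm
    · exact Finset.sup'_le _ _ (fun j _ => hMle i j)
    · -- argmax of row i of B
      obtain ⟨j₀, _, hj₀⟩ := Finset.exists_mem_eq_sup' hne (fun j' => B i j')
      have hM₁one : M₁ i j₀ = 1 := by
        rw [hM₁, hj₀]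
        exact div_self (by rw [← hj₀]; exact (hr i).ne')
      have hcj : c j₀ = 1 := by
        refine le_antisymm (hcle j₀) ?_
        calc (1:ℝ) = M₁ i j₀ := hM₁one.symm
        _ ≤ c j₀ := Finset.le_sup' (fun i' => M₁ i' j₀) (Finset.mem_univ i)
      have : M i j₀ = 1 := by
        rw [hM, hM₁one]
        show 1 / c j₀ = 1
        rw [hcj, div_one]
      calc (1:ℝ) = M i j₀ := this.symm
      _ ≤ _ := Finset.le_sup' (fun j => M i j) (Finset.mem_univ j₀)
  · intro j
    apply le_antisymm
    · exact Finset.sup'_le _ _ (fun i _ => hMle i j)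
    · obtain ⟨i₀, _, hi₀⟩ := Finset.exists_mem_eq_sup' hne (fun i' => M₁ i' j)
      have : M i₀ j = 1 := by
        rw [hM, ← hi₀]
        exact div_self (show (Finset.univ.sup' hne fun i' => M₁ i' j) ≠ 0 from (hcpos j).ne')
      calc (1:ℝ) = M i₀ j := this.symm
      _ ≤ _ := Finset.le_sup' (fun i => M i j) (Finset.mem_univ i₀)
end

section
/- Let A be a real symmetric positive definite matrix with Young's property A and unit diagonal. Then κ(A) = min_D κ(D A D) over positive diagonal matrices D. -/
/-- `A` has Young's property A: under a symmetric permutation of the indices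
(choosing which indices come first, encoded by the set `S`), `A` has the block
form `[[D₁, C₁],[C₂, D₂]]` with `D₁`, `D₂` diagonal; i.e. the two diagonal
blocks indexed by `S` and its complement are diagonal matrices. -/
def YoungPropertyA {n : ℕ} (A : Matrix (Fin n) (Fin n) ℝ) : Prop :=
  ∃ S : Finset (Fin n), ∀ i j, i ≠ j →
    ((i ∈ S ∧ j ∈ S) ∨ (i ∉ S ∧ j ∉ S)) → A i j = 0

/-!
With `J = diag(±1)` the sign matrix of the two-colouring given by property A, unit diagonal
gives `J A J = 2 - A`, so the quadratic form of `A` satisfies `q(Jx) = 2‖x‖² - q(x)`: the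
spectrum of `A` is symmetric about `1`. If `q` is maximal at the unit vector `z`, with
`α = q(z)`, this gives `(2 - α) ≤ A ≤ α` and hence `κ(A) ≤ α / (2 - α)`. For `B = D A D` the
vectors `x = D⁻¹ z` and `y = D⁻¹ J z = J x` have equal norms and `q_B(x) = α`,
`q_B(y) = 2 - α`, while `q_B(x) ≤ ‖B‖ ‖x‖²` and `‖y‖² ≤ ‖B⁻¹‖ q_B(y)`; so `κ(B) ≥ α / (2 - α)`.
-/

open scoped RealInnerProductSpace
open Matrix

local notation "𝒯" => Matrix.toEuclideanCLM (𝕜 := ℝ)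

namespace ContinuousLinearMap

variable {E : Type*} [NormedAddCommGroup E] [InnerProductSpace ℝ E]

theorem real_inner_map_self_le (T : E →L[ℝ] E) (x : E) : ⟪T x, x⟫ ≤ ‖T‖ * ‖x‖ ^ 2 := by
  calc ⟪T x, x⟫ ≤ ‖T x‖ * ‖x‖ := real_inner_le_norm _ _
    _ ≤ ‖T‖ * ‖x‖ * ‖x‖ := by gcongr; exact T.le_opNorm x
    _ = ‖T‖ * ‖x‖ ^ 2 := by ring

theorem IsPositive.inner_sq_le {S : E →L[ℝ] E} (hS : S.IsPositive) (x y : E) :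
    ⟪S x, y⟫ ^ 2 ≤ ⟪S x, x⟫ * ⟪S y, y⟫ := by
  have hquad : ∀ t : ℝ, 0 ≤ ⟪S y, y⟫ * (t * t) + 2 * ⟪S x, y⟫ * t + ⟪S x, x⟫ := by
    intro t
    have hsymm : ⟪S y, x⟫ = ⟪S x, y⟫ := by
      rw [hS.inner_left_eq_inner_right, real_inner_comm]
    have := hS.re_inner_nonneg_left (x + t • y)
    simp only [RCLike.re_to_real, map_add, map_smul, inner_add_left, inner_add_right,
      real_inner_smul_left, real_inner_smul_right, hsymm] at this
    linarith
  have := discrim_le_zero hquad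
  rw [discrim] at this
  linarith

theorem IsPositive.sq_norm_le_opNorm_mul_inner {S T : E →L[ℝ] E} (hS : S.IsPositive)
    (hST : ∀ y, S (T y) = y) (y : E) : ‖y‖ ^ 2 ≤ ‖S‖ * ⟪T y, y⟫ := by
  have hcs := hS.inner_sq_le (T y) y
  rw [hST, real_inner_self_eq_norm_sq, real_inner_comm (T y) y] at hcs
  have hTy : 0 ≤ ⟪T y, y⟫ := by
    simpa [hST, real_inner_comm] using hS.re_inner_nonneg_left (T y)
  rcases (norm_nonneg y).eq_or_lt with hy | hy
  · rw [← hy]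
    simpa using mul_nonneg (norm_nonneg S) hTy
  · have : ‖y‖ ^ 2 * ‖y‖ ^ 2 ≤ ‖y‖ ^ 2 * (‖S‖ * ⟪T y, y⟫) := by
      nlinarith [mul_le_mul_of_nonneg_left (S.real_inner_map_self_le y) hTy]
    exact le_of_mul_le_mul_left this (pow_pos hy 2)

theorem IsPositive.opNorm_le_of_inner_le {T : E →L[ℝ] E} (hT : T.IsPositive) {c : ℝ}
    (hc : 0 ≤ c) (h : ∀ x, ⟪T x, x⟫ ≤ c * ‖x‖ ^ 2) : ‖T‖ ≤ c := by
  rw [T.norm_eq_iSup_rayleighQuotient hT.isSymmetric]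
  refine ciSup_le fun x => ?_
  rw [abs_of_nonneg (div_nonneg (hT.2 x) (sq_nonneg _))]
  rcases (norm_nonneg x).eq_or_lt with hx | hx
  · simp [← hx, hc]
  · rw [div_le_iff₀ (pow_pos hx 2)]
    exact h x

theorem opNorm_le_inv_of_le_inner {T S : E →L[ℝ] E} {c : ℝ} (hc : 0 < c)
    (h : ∀ x, c * ‖x‖ ^ 2 ≤ ⟪T x, x⟫) (hTS : ∀ y, T (S y) = y) : ‖S‖ ≤ c⁻¹ := by
  have hanti := T.antilipschitz_of_forall_le_inner_map (c := c.toNNReal)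
    (Real.toNNReal_pos.2 hc) fun x => by
      simpa [mul_comm, hc.le] using (h x).trans (le_abs_self _)
  refine S.opNorm_le_bound (inv_nonneg.2 hc.le) fun y => ?_
  simpa [hTS, hc.le] using hanti.le_mul_dist (S y) 0

theorem exists_forall_inner_le [FiniteDimensional ℝ E] [Nontrivial E] (T : E →L[ℝ] E) :
    ∃ z : E, ‖z‖ = 1 ∧ ∀ x, ⟪T x, x⟫ ≤ ⟪T z, z⟫ * ‖x‖ ^ 2 := by
  obtain ⟨z, hz, hmax⟩ := (isCompact_sphere (0 : E) 1).exists_isMaxOn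
    (NormedSpace.sphere_nonempty.2 zero_le_one) T.reApplyInnerSelf_continuous.continuousOn
  refine ⟨z, by simpa using hz, fun x => ?_⟩
  rcases eq_or_ne x 0 with rfl | hx
  · simp
  have hx' : 0 < ‖x‖ := norm_pos_iff.2 hx
  have := isMaxOn_iff.1 hmax (‖x‖⁻¹ • x) (by simp [norm_smul, hx'.ne'])
  simp only [T.reApplyInnerSelf_smul, RCLike.re_to_real, reApplyInnerSelf_apply, norm_inv,
    norm_norm] at this
  rw [inv_pow, inv_mul_le_iff₀ (pow_pos hx' 2)] at this
  linarith

end ContinuousLinearMap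

namespace Matrix

variable {ι : Type*} [Fintype ι] [DecidableEq ι]

theorem toEuclideanCLM_apply_apply_of_mul_eq_one {P Q : Matrix ι ι ℝ} (h : P * Q = 1)
    (x : EuclideanSpace ℝ ι) : 𝒯 P (𝒯 Q x) = x := by
  rw [← mul_apply_eq_comp, ← map_mul, h, map_one, one_apply_eq_self]

theorem norm_toEuclideanCLM_apply_of_mem_unitaryGroup {P : Matrix ι ι ℝ}
    (hP : P ∈ unitaryGroup ι ℝ) (x : EuclideanSpace ℝ ι) : ‖𝒯 P x‖ = ‖x‖ :=
  ContinuousLinearMap.norm_map_of_mem_unitary (Unitary.map_mem _ hP) x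

theorem PosSemidef.isPositive_toEuclideanCLM {M : Matrix ι ι ℝ} (hM : M.PosSemidef) :
    (𝒯 M).IsPositive :=
  (ContinuousLinearMap.isPositive_toLinearMap_iff _).1 (isPositive_toEuclideanLin_iff.2 hM)

theorem PosDef.inner_toEuclideanCLM_pos {M : Matrix ι ι ℝ} (hM : M.PosDef)
    {x : EuclideanSpace ℝ ι} (hx : x ≠ 0) : 0 < ⟪𝒯 M x, x⟫ := by
  rw [real_inner_comm, inner_toEuclideanCLM]
  exact hM.dotProduct_mulVec_pos (by simpa using hx)

theorem inner_toEuclideanCLM_conjTranspose_mul_mul (P M : Matrix ι ι ℝ)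
    (x : EuclideanSpace ℝ ι) : ⟪𝒯 (Pᴴ * M * P) x, x⟫ = ⟪𝒯 M (𝒯 P x), 𝒯 P x⟫ := by
  have h : 𝒯 (Pᴴ * M * P) = ContinuousLinearMap.adjoint (𝒯 P) * 𝒯 M * 𝒯 P := by
    rw [map_mul, map_mul]
    congr 2
    exact map_star _ _
  rw [h, mul_apply_eq_comp, mul_apply_eq_comp, ContinuousLinearMap.adjoint_inner_left]

theorem inner_toEuclideanCLM_apply_of_conj_eq_two_sub {A J : Matrix ι ι ℝ}
    (hJ : Jᴴ * A * J = 2 - A) (x : EuclideanSpace ℝ ι) :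
    ⟪𝒯 A (𝒯 J x), 𝒯 J x⟫ = 2 * ‖x‖ ^ 2 - ⟪𝒯 A x, x⟫ := by
  rw [← inner_toEuclideanCLM_conjTranspose_mul_mul, hJ, map_sub, map_ofNat, _root_.sub_apply,
    inner_sub_left]
  simp [two_smul, inner_add_left, two_mul]

end Matrix

theorem YoungPropertyA.exists_diagonal_conj_eq_two_sub {n : ℕ} {A : Matrix (Fin n) (Fin n) ℝ}
    (hA : YoungPropertyA A) (hdiag : ∀ i, A i i = 1) :
    ∃ ε : Fin n → ℝ, diagonal ε ∈ unitaryGroup (Fin n) ℝ ∧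
      (diagonal ε)ᴴ * A * diagonal ε = 2 - A := by
  classical
  obtain ⟨S, hS⟩ := hA
  set ε : Fin n → ℝ := fun i => if i ∈ S then 1 else -1
  refine ⟨ε, ?_, ?_⟩
  · rw [mem_unitaryGroup_iff, star_eq_conjTranspose, diagonal_conjTranspose,
      diagonal_mul_diagonal, ← diagonal_one]
    congr 1
    ext i
    by_cases hi : i ∈ S <;> simp [ε, hi]
  ext i j
  rw [diagonal_conjTranspose, mul_diagonal, diagonal_mul, Matrix.sub_apply]
  rcases eq_or_ne i j with rfl | hij
  · by_cases hi : i ∈ S <;> simp [ε, hi, hdiag, ofNat_apply] <;> norm_num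
  · by_cases hi : i ∈ S <;> by_cases hj : j ∈ S <;> simp [ε, hi, hj, hij, hS i j hij, ofNat_apply]

section ConditionNumber

variable {n : ℕ}

theorem kappa_nonneg (M : Matrix (Fin n) (Fin n) ℝ) : 0 ≤ kappa M :=
  mul_nonneg (norm_nonneg _) (norm_nonneg _)

theorem Matrix.PosDef.kappa_le_div {A : Matrix (Fin n) (Fin n) ℝ} (hA : A.PosDef) {a b : ℝ}
    (ha : 0 ≤ a) (hb : 0 < b) (hlo : ∀ x, b * ‖x‖ ^ 2 ≤ ⟪𝒯 A x, x⟫)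
    (hhi : ∀ x, ⟪𝒯 A x, x⟫ ≤ a * ‖x‖ ^ 2) : kappa A ≤ a / b :=
  mul_le_mul (hA.posSemidef.isPositive_toEuclideanCLM.opNorm_le_of_inner_le ha hhi)
    (ContinuousLinearMap.opNorm_le_inv_of_le_inner hb hlo
      (toEuclideanCLM_apply_apply_of_mul_eq_one
        (mul_nonsing_inv A ((isUnit_iff_isUnit_det A).1 hA.isUnit))))
    (norm_nonneg _) ha

theorem Matrix.PosDef.inner_le_kappa_mul_inner {B : Matrix (Fin n) (Fin n) ℝ} (hB : B.PosDef)
    {x y : EuclideanSpace ℝ (Fin n)} (hxy : ‖x‖ = ‖y‖) :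
    ⟪𝒯 B x, x⟫ ≤ kappa B * ⟪𝒯 B y, y⟫ := by
  have hBinv : ∀ y, 𝒯 B⁻¹ (𝒯 B y) = y := toEuclideanCLM_apply_apply_of_mul_eq_one
    (nonsing_inv_mul B ((isUnit_iff_isUnit_det B).1 hB.isUnit))
  calc ⟪𝒯 B x, x⟫ ≤ ‖𝒯 B‖ * ‖y‖ ^ 2 := hxy ▸ (𝒯 B).real_inner_map_self_le x
    _ ≤ ‖𝒯 B‖ * (‖𝒯 B⁻¹‖ * ⟪𝒯 B y, y⟫) := by
      gcongr
      exact hB.inv.posSemidef.isPositive_toEuclideanCLM.sq_norm_le_opNorm_mul_inner hBinv y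
    _ = kappa B * ⟪𝒯 B y, y⟫ := by rw [kappa, mul_assoc]

theorem Matrix.PosDef.inner_lt_two_mul_sq_norm {A J : Matrix (Fin n) (Fin n) ℝ} (hA : A.PosDef)
    (hJ : J ∈ unitaryGroup (Fin n) ℝ) (hJA : Jᴴ * A * J = 2 - A)
    {z : EuclideanSpace ℝ (Fin n)} (hz : z ≠ 0) : ⟪𝒯 A z, z⟫ < 2 * ‖z‖ ^ 2 := by
  have hJz : 𝒯 J z ≠ 0 := by
    rwa [← norm_ne_zero_iff, norm_toEuclideanCLM_apply_of_mem_unitaryGroup hJ, norm_ne_zero_iff]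
  have := hA.inner_toEuclideanCLM_pos hJz
  rw [inner_toEuclideanCLM_apply_of_conj_eq_two_sub hJA] at this
  linarith

theorem Matrix.PosDef.kappa_le_div_two_sub {A J : Matrix (Fin n) (Fin n) ℝ} (hA : A.PosDef)
    (hJ : J ∈ unitaryGroup (Fin n) ℝ) (hJA : Jᴴ * A * J = 2 - A) {α : ℝ} (hα : 0 ≤ α)
    (hα2 : α < 2) (hmax : ∀ x, ⟪𝒯 A x, x⟫ ≤ α * ‖x‖ ^ 2) : kappa A ≤ α / (2 - α) := by
  refine hA.kappa_le_div hα (by linarith) (fun x => ?_) hmax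
  have := hmax (𝒯 J x)
  rw [inner_toEuclideanCLM_apply_of_conj_eq_two_sub hJA,
    norm_toEuclideanCLM_apply_of_mem_unitaryGroup hJ] at this
  linarith

theorem Matrix.PosDef.inner_le_kappa_diagonal_mul_mul_diagonal {A : Matrix (Fin n) (Fin n) ℝ}
    (hA : A.PosDef) {ε d : Fin n → ℝ} (hJ : diagonal ε ∈ unitaryGroup (Fin n) ℝ)
    (hJA : (diagonal ε)ᴴ * A * diagonal ε = 2 - A) (hd : ∀ i, 0 < d i)
    (z : EuclideanSpace ℝ (Fin n)) :
    ⟪𝒯 A z, z⟫ ≤ kappa (diagonal d * A * diagonal d) * (2 * ‖z‖ ^ 2 - ⟪𝒯 A z, z⟫) := by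
  have hD : (diagonal d)ᴴ = diagonal d := by rw [diagonal_conjTranspose, star_trivial]
  have hDinv : diagonal d * diagonal d⁻¹ = 1 := by
    rw [diagonal_mul_diagonal, ← diagonal_one]
    exact congrArg diagonal (funext fun i => mul_inv_cancel₀ (hd i).ne')
  have hB : (diagonal d * A * diagonal d).PosDef := by
    have := (IsUnit.posDef_star_right_conjugate_iff
      (isUnit_diagonal.2 (Pi.isUnit_iff.2 fun i => (hd i).ne'.isUnit))).2 hA
    rwa [star_eq_conjTranspose, hD] at this
  have hqB : ∀ w, ⟪𝒯 (diagonal d * A * diagonal d) w, w⟫ =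
      ⟪𝒯 A (𝒯 (diagonal d) w), 𝒯 (diagonal d) w⟫ := fun w => by
    rw [← inner_toEuclideanCLM_conjTranspose_mul_mul, hD]
  set x := 𝒯 (diagonal d⁻¹) z
  have hx : 𝒯 (diagonal d) x = z := toEuclideanCLM_apply_apply_of_mul_eq_one hDinv z
  have hJx : 𝒯 (diagonal d) (𝒯 (diagonal ε) x) = 𝒯 (diagonal ε) z := by
    rw [← hx, ← mul_apply_eq_comp, ← map_mul, (commute_diagonal d ε).eq, map_mul,
      mul_apply_eq_comp]
  have := hB.inner_le_kappa_mul_inner (norm_toEuclideanCLM_apply_of_mem_unitaryGroup hJ x).symm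
  rwa [hqB, hqB, hx, hJx, inner_toEuclideanCLM_apply_of_conj_eq_two_sub hJA] at this

end ConditionNumber

/-- Forsythe–Straus: if `A` is symmetric positive definite with unit diagonal
and Young's property A, then `κ(A) = min_D κ(D A D)` over positive diagonal
matrices `D`. -/
theorem stmt_19 (n : ℕ) (A : Matrix (Fin n) (Fin n) ℝ)
    (hA : A.PosDef) (hdiag : ∀ i, A i i = 1) (hyoung : YoungPropertyA A) :
    IsLeast {x : ℝ | ∃ d : Fin n → ℝ, (∀ i, 0 < d i) ∧
        x = kappa (Matrix.diagonal d * A * Matrix.diagonal d)}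
      (kappa A) := by
  refine ⟨⟨fun _ => 1, fun _ => one_pos, by simp⟩, ?_⟩
  rintro _ ⟨d, hd, rfl⟩
  rcases Nat.eq_zero_or_pos n with rfl | hn
  · simp [kappa, Subsingleton.elim _ (0 : Matrix (Fin 0) (Fin 0) ℝ)]
  have : NeZero n := ⟨hn.ne'⟩
  obtain ⟨ε, hJ, hJA⟩ := hyoung.exists_diagonal_conj_eq_two_sub hdiag
  obtain ⟨z, hz, hmax⟩ := (𝒯 A).exists_forall_inner_le
  have hz0 : z ≠ 0 := norm_ne_zero_iff.1 (by simp [hz])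
  have hlt := hA.inner_lt_two_mul_sq_norm hJ hJA hz0
  rw [hz, one_pow, mul_one] at hlt
  calc kappa A ≤ ⟪𝒯 A z, z⟫ / (2 - ⟪𝒯 A z, z⟫) :=
        hA.kappa_le_div_two_sub hJ hJA (hA.inner_toEuclideanCLM_pos hz0).le hlt hmax
    _ ≤ kappa (diagonal d * A * diagonal d) := div_le_of_le_mul₀ (by linarith) (kappa_nonneg _)
        (by simpa [hz] using hA.inner_le_kappa_diagonal_mul_mul_diagonal hJ hJA hd z)
end
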